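/- For a simplicial group G, the homotopy H : Diag NG × Δ^1 → Diag NG from D_G S_G to id is constant along S_G: for every x ∈ W̄_n G and every k ∈ [0,n+1], H_n(x (S_G)_n, τ^{n+1−k}) = x (S_G)_n. Consequently W̄G is a strong simplicial deformation retract of Diag NG, with strong deformation retraction D_G. -/

import Mathlib

namespace Paper

/-- clamped coface map `δ^k : [a] → [b]`. -/
def δOH (k a b : ℕ) : Fin (a+1) →o Fin (b+1) where
  toFun i := ⟨min (if (i:ℕ) < k then (i:ℕ) else (i:ℕ)+1) b, Nat.lt_succ_of_le (Nat.min_le_right _ _)⟩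
  monotone' := by
    intro i j hij
    have h : (i:ℕ) ≤ (j:ℕ) := hij
    simp only [Fin.mk_le_mk]
    split_ifs <;> omega

/-- clamped codegeneracy map `σ^k : [a] → [b]`. -/
def σOH (k a b : ℕ) : Fin (a+1) →o Fin (b+1) where
  toFun i := ⟨min (if (i:ℕ) ≤ k then (i:ℕ) else (i:ℕ)-1) b, Nat.lt_succ_of_le (Nat.min_le_right _ _)⟩
  monotone' := by
    intro i j hij
    have h : (i:ℕ) ≤ (j:ℕ) := hij
    simp only [Fin.mk_le_mk]
    split_ifs <;> omega

/-- `τ^k : [n] → [1]`, sending `[0, n-k]` to `0` and the rest to `1`. -/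
def τOH (n k : ℕ) : Fin (n+1) →o Fin 2 where
  toFun i := if (i:ℕ) + k ≤ n then 0 else 1
  monotone' := by
    intro i j hij
    have h : (i:ℕ) ≤ (j:ℕ) := hij
    dsimp only
    split_ifs with h1 h2 h3
    · exact le_refl _
    · exact Fin.zero_le _
    · exact absurd h3 (by omega)
    · exact le_refl _

/-- application of `θ : [m] → [n]` to a natural number (clamped). -/
def fApp {m n : ℕ} (θ : Fin (m+1) →o Fin (n+1)) (x : ℕ) : ℕ :=
  (θ ⟨min x m, Nat.lt_succ_of_le (Nat.min_le_right _ _)⟩ : Fin (n+1))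

theorem fApp_mono {m n : ℕ} (θ : Fin (m+1) →o Fin (n+1)) {x y : ℕ} (h : x ≤ y) :
    fApp θ x ≤ fApp θ y :=
  Fin.le_def.mp (θ.monotone (Fin.mk_le_mk.mpr (by omega)))

theorem fApp_le {m n : ℕ} (θ : Fin (m+1) →o Fin (n+1)) (x : ℕ) : fApp θ x ≤ n :=
  Nat.lt_succ_iff.mp (Fin.isLt _)

theorem fApp_coe {m n : ℕ} (θ : Fin (m+1) →o Fin (n+1)) (p : Fin (m+1)) :
    fApp θ (p:ℕ) = (θ p : ℕ) := by
  have hp : (⟨min (p:ℕ) m, Nat.lt_succ_of_le (Nat.min_le_right _ _)⟩ : Fin (m+1)) = p :=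
    Fin.ext (show min (p:ℕ) m = (p:ℕ) from by have := p.isLt; omega)
  unfold fApp
  rw [hp]

/-- `Spl_{≤ p}(θ) : [p] → [pθ]`. -/
def splLe {m n : ℕ} (θ : Fin (m+1) →o Fin (n+1)) (p : Fin (m+1)) :
    Fin ((p:ℕ)+1) →o Fin ((θ p : ℕ)+1) where
  toFun i := ⟨fApp θ (i:ℕ), by
    have h1 : fApp θ (i:ℕ) ≤ fApp θ (p:ℕ) := fApp_mono θ (by have := i.isLt; omega)
    have h2 : fApp θ (p:ℕ) = (θ p : ℕ) := fApp_coe θ p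
    omega⟩
  monotone' := by
    intro a b hab
    have h : (a:ℕ) ≤ (b:ℕ) := hab
    simp only [Fin.mk_le_mk]
    exact fApp_mono θ h

/-- `Spl_{≥ p}(θ) : [m-p] → [n-pθ]`. -/
def splGe {m n : ℕ} (θ : Fin (m+1) →o Fin (n+1)) (p : Fin (m+1)) :
    Fin (m - (p:ℕ) + 1) →o Fin (n - (θ p : ℕ) + 1) where
  toFun i := ⟨fApp θ ((i:ℕ) + (p:ℕ)) - (θ p : ℕ), by
    have h1 : fApp θ ((i:ℕ) + (p:ℕ)) ≤ n := fApp_le θ _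
    omega⟩
  monotone' := by
    intro a b hab
    have h : (a:ℕ) ≤ (b:ℕ) := hab
    simp only [Fin.mk_le_mk]
    have := fApp_mono θ (show (a:ℕ) + (p:ℕ) ≤ (b:ℕ) + (p:ℕ) by omega)
    omega

/-- the restriction `θ|_[i]^[j] : [i] → [j]` of `θ` (clamped). -/
def restrictOH {m n : ℕ} (θ : Fin (m+1) →o Fin (n+1)) (i j : ℕ) : Fin (i+1) →o Fin (j+1) where
  toFun k := ⟨min (fApp θ (k:ℕ)) j, Nat.lt_succ_of_le (Nat.min_le_right _ _)⟩
  monotone' := by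
    intro a b hab
    have h : (a:ℕ) ≤ (b:ℕ) := hab
    simp only [Fin.mk_le_mk]
    have := fApp_mono θ h
    omega

/-- ascending product `f a * f (a+1) * ⋯ * f (b-1)`. -/
def aProd {γ : Type*} [Monoid γ] (f : ℕ → γ) (a : ℕ) : ℕ → γ
  | 0 => 1
  | b+1 => if a ≤ b then aProd f a b * f b else 1

/-- descending product `f (b-1) * f (b-2) * ⋯ * f a`. -/
def dProd {γ : Type*} [Monoid γ] (f : ℕ → γ) (a : ℕ) : ℕ → γ
  | 0 => 1
  | b+1 => if a ≤ b then f b * dProd f a b else 1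

end Paper
namespace Paper

/-- A simplicial group, given by levels, structure maps, functoriality,
and levelwise multiplicativity. -/
structure SGrp where
  obj : ℕ → Type
  grp : ∀ n, Group (obj n)
  map : ∀ {m n : ℕ}, (Fin (m+1) →o Fin (n+1)) → obj n → obj m
  map_id : ∀ {n : ℕ} (x : obj n), map OrderHom.id x = x
  map_comp : ∀ {l m n : ℕ} (α : Fin (l+1) →o Fin (m+1)) (β : Fin (m+1) →o Fin (n+1)) (x : obj n),
    map α (map β x) = map (β.comp α) x
  map_mul : ∀ {m n : ℕ} (θ : Fin (m+1) →o Fin (n+1)) (x y : obj n),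
    map θ (x * y) = map θ x * map θ y

attribute [instance] SGrp.grp

namespace SGrp

/-- face `d_k : G_N → G_{N-1}` -/
def face (G : SGrp) (k : ℕ) {N : ℕ} : G.obj N → G.obj (N-1) := G.map (δOH k (N-1) N)

/-- degeneracy `s_k : G_M → G_{M+1}` -/
def deg (G : SGrp) (k : ℕ) {M : ℕ} : G.obj M → G.obj (M+1) := G.map (σOH k (M+1) M)

/-- transport between levels (junk value `1` when levels differ). -/
def gcast (G : SGrp) {a : ℕ} (b : ℕ) (x : G.obj a) : G.obj b := if h : a = b then h ▸ x else 1

/-- descending composite of faces `d_{i+c} d_{i+c-1} ⋯ d_{i+1}`. -/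
def dcomp (G : SGrp) : (i c : ℕ) → {N : ℕ} → G.obj N → G.obj (N - c)
  | _, 0, _, x => x
  | i, c+1, _, x => G.face (i+1) (G.dcomp (i+1) c x)

/-- ascending composite of degeneracies `s_i s_{i+1} ⋯ s_{i+c-1}`. -/
def scomp (G : SGrp) : (i c : ℕ) → {M : ℕ} → G.obj M → G.obj (M + c)
  | _, 0, _, x => x
  | i, c+1, _, x => G.deg (i+c) (G.scomp i c x)

/-- `x ↦ x d_j ⋯ d_{i+1} s_i ⋯ s_{j-1}`, an endomap of `G_N`. -/
def ds (G : SGrp) (i j : ℕ) {N : ℕ} (x : G.obj N) : G.obj N :=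
  G.gcast N (G.scomp i (min (j - i) N) (G.dcomp i (min (j - i) N) x))

/-- `x ↦ x d_j ⋯ d_{i+1} s_i ⋯ s_{n-1} : G_j → G_n`. -/
def dsTo (G : SGrp) (i n : ℕ) {j : ℕ} (x : G.obj j) : G.obj n :=
  G.gcast n (G.scomp i (n - i) (G.gcast i (G.dcomp i (j - i) x)))

/-- the `y_i` of the section `S_G`, defined by descending recursion (with fuel). -/
def yAux (G : SGrp) (n : ℕ) (g : ∀ j : ℕ, G.obj j) : ℕ → ℕ → G.obj n
  | 0, _ => 1
  | fuel+1, i =>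
      aProd (fun j => G.ds i j (G.yAux n g fuel j)⁻¹) (i+1) n *
      dProd (fun j => G.dsTo i n (g j)) i n

/-- `W̄_n G = ∏_{j = n-1}^{0} G_j`. -/
def WbarN (G : SGrp) (n : ℕ) : Type := ∀ j : Fin n, G.obj (j:ℕ)

/-- extension of a tuple in `W̄_n G` by `1`. -/
def gE (G : SGrp) {n : ℕ} (g : G.WbarN n) : ∀ j : ℕ, G.obj j :=
  fun j => if h : j < n then g ⟨j, h⟩ else 1

/-- the coretraction `(S_G)_n : W̄_n G → Diag_n NG = (G_n)^n`. -/
def SGn (G : SGrp) (n : ℕ) (g : G.WbarN n) : Fin n → G.obj n :=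
  fun i => G.yAux n (G.gE g) n (i:ℕ)

/-- extension of a tuple in `(G_n)^n` by `1`. -/
def xE (G : SGrp) {n : ℕ} (x : Fin n → G.obj n) : ℕ → G.obj n :=
  fun j => if h : j < n then x ⟨j, h⟩ else 1

/-- the structure map `W̄_θ : W̄_n G → W̄_m G` of the Kan classifying simplicial set. -/
def wbarMap (G : SGrp) {m n : ℕ} (θ : Fin (m+1) →o Fin (n+1)) (g : G.WbarN n) : G.WbarN m :=
  fun i => dProd (fun j => G.map (restrictOH θ (i:ℕ) j) (G.gE g j))
    ((θ i.castSucc : Fin (n+1)) : ℕ) ((θ i.succ : Fin (n+1)) : ℕ)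

/-- the structure map `(Diag NG)_θ : (G_n)^n → (G_m)^m` of the diagonal of the nerve. -/
def diagMap (G : SGrp) {m n : ℕ} (θ : Fin (m+1) →o Fin (n+1)) (x : Fin n → G.obj n) :
    Fin m → G.obj m :=
  fun i => dProd (fun j => G.map θ (G.xE x j))
    ((θ i.castSucc : Fin (n+1)) : ℕ) ((θ i.succ : Fin (n+1)) : ℕ)

/-- the retraction `(D_G)_n : Diag_n NG → W̄_n G`, `(g_i)_i ↦ (g_i d_n ⋯ d_{i+1})_i`. -/
def DGn (G : SGrp) (n : ℕ) (x : Fin n → G.obj n) : G.WbarN n :=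
  fun i => G.gcast (i:ℕ) (G.dcomp (i:ℕ) (n - (i:ℕ)) (x i))

/-- the components `y_i^{(n+1-k)}` of the homotopy `H`, by descending recursion (with fuel). -/
def hAux (G : SGrp) (n k : ℕ) (g : ℕ → G.obj n) : ℕ → ℕ → G.obj n
  | 0, _ => 1
  | fuel+1, i =>
      if k ≤ i + 1 then g i
      else
        aProd (fun j => G.ds i j (G.hAux n k g fuel j)⁻¹) (i+1) (k-1) *
        dProd (fun j => G.ds i (k-1) (g j)) i (k-1)

end SGrp

/-- recover `k` from the simplex `τ^{n+1-k} ∈ Δ^1_n`: the number of vertices sent to `0`. -/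
def kOf {n : ℕ} (t : Fin (n+1) →o Fin 2) : ℕ :=
  (Finset.univ.filter (fun i => t i = 0)).card

namespace SGrp

/-- the homotopy `H_n : Diag_n NG × Δ^1_n → Diag_n NG`. -/
def Hn (G : SGrp) (n : ℕ) (x : Fin n → G.obj n) (t : Fin (n+1) →o Fin 2) : Fin n → G.obj n :=
  fun i => G.hAux n (kOf t) (G.xE x) (n+1) (i:ℕ)

end SGrp

/-- morphisms of simplicial groups. -/
structure SGrpHom (G G' : SGrp) where
  app : ∀ n, G.obj n → G'.obj n
  comm : ∀ {m n : ℕ} (θ : Fin (m+1) →o Fin (n+1)) (x : G.obj n),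
    app m (G.map θ x) = G'.map θ (app n x)
  mul : ∀ (n : ℕ) (x y : G.obj n), app n (x * y) = app n x * app n y

end Paper

/-!
Every operator `d_j ⋯ d_{i+1} s_i ⋯ s_{j-1}` in the formulas for `S_G` and `H` is the structure
map of the monotone map `[n] → [n]` collapsing `[i, j]` onto `i`, and these collapses compose by
`η_{i,m} ∘ η_{i,j} = η_{i, max j m}`. Hence the descending recursion `y_i = (∏ y_j η_{i,j})⁻¹ B_i`
telescopes: collapsing a partial product `y_{m-1} ⋯ y_i` by `η_{i,m}` gives the product of the
individually collapsed `y_j`. This is exactly what makes the recursion for `H`, fed with `S_G g`,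
return `S_G g` at every `τ^{n+1-k}`. The face chains of `D_G` kill every collapse, which gives
`D_G S_G = id`; the end values of `H` are read off its recursion; and naturality of `H` is proved
one block `[iθ, (i+1)θ]` at a time, by descending induction on `i`, with the same telescoping.
-/

namespace Paper

section Products

variable {γ : Type*} [Monoid γ]

theorem aProd_eq_one_of_le (f : ℕ → γ) {a b : ℕ} (h : b ≤ a) : aProd f a b = 1 := by
  cases b with
  | zero => rfl
  | succ b => exact if_neg (by omega)

theorem dProd_eq_one_of_le (f : ℕ → γ) {a b : ℕ} (h : b ≤ a) : dProd f a b = 1 := by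
  cases b with
  | zero => rfl
  | succ b => exact if_neg (by omega)

theorem aProd_succ (f : ℕ → γ) {a b : ℕ} (h : a ≤ b) :
    aProd f a (b+1) = aProd f a b * f b := if_pos h

theorem dProd_succ (f : ℕ → γ) {a b : ℕ} (h : a ≤ b) :
    dProd f a (b+1) = f b * dProd f a b := if_pos h

theorem aProd_congr {f g : ℕ → γ} {a b : ℕ} (h : ∀ j, a ≤ j → j < b → f j = g j) :
    aProd f a b = aProd g a b := by
  induction b with
  | zero => rfl
  | succ b ih =>
    by_cases hab : a ≤ b
    · rw [aProd_succ f hab, aProd_succ g hab, ih (fun j h1 h2 => h j h1 (by omega)),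
        h b hab (by omega)]
    · rw [aProd_eq_one_of_le f (by omega), aProd_eq_one_of_le g (by omega)]

theorem dProd_congr {f g : ℕ → γ} {a b : ℕ} (h : ∀ j, a ≤ j → j < b → f j = g j) :
    dProd f a b = dProd g a b := by
  induction b with
  | zero => rfl
  | succ b ih =>
    by_cases hab : a ≤ b
    · rw [dProd_succ f hab, dProd_succ g hab, ih (fun j h1 h2 => h j h1 (by omega)),
        h b hab (by omega)]
    · rw [dProd_eq_one_of_le f (by omega), dProd_eq_one_of_le g (by omega)]

theorem aProd_split (f : ℕ → γ) {a c b : ℕ} (hac : a ≤ c) (hcb : c ≤ b) :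
    aProd f a b = aProd f a c * aProd f c b := by
  induction b with
  | zero =>
    obtain rfl : c = 0 := by omega
    rw [aProd_eq_one_of_le f le_rfl, mul_one]
  | succ b ih =>
    rcases Nat.lt_or_eq_of_le hcb with hcb | rfl
    · rw [aProd_succ f (by omega), aProd_succ f (by omega), ih (by omega), mul_assoc]
    · rw [aProd_eq_one_of_le f le_rfl, mul_one]

theorem dProd_split (f : ℕ → γ) {a c b : ℕ} (hac : a ≤ c) (hcb : c ≤ b) :
    dProd f a b = dProd f c b * dProd f a c := by
  induction b with
  | zero =>
    obtain rfl : c = 0 := by omega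
    rw [dProd_eq_one_of_le f le_rfl, one_mul]
  | succ b ih =>
    rcases Nat.lt_or_eq_of_le hcb with hcb | rfl
    · rw [dProd_succ f (by omega), dProd_succ f (by omega), ih (by omega), mul_assoc]
    · rw [dProd_eq_one_of_le f le_rfl, one_mul]

theorem dProd_succ_bot (f : ℕ → γ) {a b : ℕ} (h : a < b) :
    dProd f a b = dProd f (a+1) b * f a := by
  rw [dProd_split f (Nat.le_succ a) h, dProd_succ f le_rfl, dProd_eq_one_of_le f le_rfl, mul_one]

theorem map_aProd {δ F : Type*} [Monoid δ] [FunLike F γ δ] [MonoidHomClass F γ δ] (φ : F)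
    (f : ℕ → γ) (a b : ℕ) : φ (aProd f a b) = aProd (fun j => φ (f j)) a b := by
  induction b with
  | zero => exact map_one φ
  | succ b ih =>
    by_cases hab : a ≤ b
    · rw [aProd_succ f hab, map_mul, ih, aProd_succ _ hab]
    · rw [aProd_eq_one_of_le f (by omega), aProd_eq_one_of_le _ (a := a) (by omega), map_one]

theorem map_dProd {δ F : Type*} [Monoid δ] [FunLike F γ δ] [MonoidHomClass F γ δ] (φ : F)
    (f : ℕ → γ) (a b : ℕ) : φ (dProd f a b) = dProd (fun j => φ (f j)) a b := by
  induction b with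
  | zero => exact map_one φ
  | succ b ih =>
    by_cases hab : a ≤ b
    · rw [dProd_succ f hab, map_mul, ih, dProd_succ _ hab]
    · rw [dProd_eq_one_of_le f (by omega), dProd_eq_one_of_le _ (a := a) (by omega), map_one]

end Products

theorem aProd_inv {γ : Type*} [Group γ] (f : ℕ → γ) (a b : ℕ) :
    aProd (fun j => (f j)⁻¹) a b = (dProd f a b)⁻¹ := by
  induction b with
  | zero => exact inv_one.symm
  | succ b ih =>
    by_cases hab : a ≤ b
    · rw [aProd_succ _ hab, dProd_succ f hab, ih, mul_inv_rev]
    · rw [aProd_eq_one_of_le _ (by omega), dProd_eq_one_of_le f (by omega), inv_one]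

/-- Collapses the interval `[i, j]` of `[N]` onto `i`. -/
def ηOH (i j N : ℕ) : Fin (N+1) →o Fin (N+1) where
  toFun p := ⟨min (if (p:ℕ) ≤ i then (p:ℕ) else if (p:ℕ) ≤ j then i else (p:ℕ)) N,
    Nat.lt_succ_of_le (Nat.min_le_right _ _)⟩
  monotone' := by
    intro a b hab
    have h : (a:ℕ) ≤ (b:ℕ) := hab
    simp only [Fin.mk_le_mk]
    split_ifs <;> omega

def ζOH (i n j : ℕ) : Fin (n+1) →o Fin (j+1) where
  toFun p := ⟨min (min (p:ℕ) i) j, Nat.lt_succ_of_le (Nat.min_le_right _ _)⟩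
  monotone' := by
    intro a b hab
    have h : (a:ℕ) ≤ (b:ℕ) := hab
    simp only [Fin.mk_le_mk]
    omega

def ιOH (a b : ℕ) : Fin (a+1) →o Fin (b+1) where
  toFun p := ⟨min (p:ℕ) b, Nat.lt_succ_of_le (Nat.min_le_right _ _)⟩
  monotone' := by
    intro a b hab
    have h : (a:ℕ) ≤ (b:ℕ) := hab
    simp only [Fin.mk_le_mk]
    omega

/-- `δ^{i+c} ⋯ δ^{i+1} : [N-c] → [N]`. -/
def δchain (i c N : ℕ) : Fin (N-c+1) →o Fin (N+1) where
  toFun p := ⟨min (if (p:ℕ) ≤ i then (p:ℕ) else (p:ℕ) + c) N,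
    Nat.lt_succ_of_le (Nat.min_le_right _ _)⟩
  monotone' := by
    intro a b hab
    have h : (a:ℕ) ≤ (b:ℕ) := hab
    simp only [Fin.mk_le_mk]
    split_ifs <;> omega

/-- `σ^i ⋯ σ^{i+c-1} : [M+c] → [M]`. -/
def σchain (i c M : ℕ) : Fin (M+c+1) →o Fin (M+1) where
  toFun p := ⟨min (if (p:ℕ) ≤ i then (p:ℕ) else if (p:ℕ) ≤ i+c then i else (p:ℕ) - c) M,
    Nat.lt_succ_of_le (Nat.min_le_right _ _)⟩
  monotone' := by
    intro a b hab
    have h : (a:ℕ) ≤ (b:ℕ) := hab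
    simp only [Fin.mk_le_mk]
    split_ifs <;> omega

theorem orderHom_ext_val {m n : ℕ} {θ ψ : Fin (m+1) →o Fin (n+1)}
    (h : ∀ p : Fin (m+1), (θ p : ℕ) = (ψ p : ℕ)) : θ = ψ :=
  OrderHom.ext _ _ (funext fun p => Fin.ext (h p))

theorem ηOH_val {i j N : ℕ} (w : Fin (N+1)) :
    ((ηOH i j N w : Fin (N+1)) : ℕ) =
    min (if (w:ℕ) ≤ i then (w:ℕ) else if (w:ℕ) ≤ j then i else (w:ℕ)) N := rfl

theorem fApp_mk {m n : ℕ} (θ : Fin (m+1) →o Fin (n+1)) {v : ℕ} (hv : v < m + 1) :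
    (θ ⟨v, hv⟩ : ℕ) = fApp θ v := by
  rw [fApp]
  exact congrArg (fun z : Fin (n+1) => (z:ℕ)) (congrArg θ (Fin.ext (show v = min v m by omega)))

theorem fApp_castSucc {m n : ℕ} (θ : Fin (m+1) →o Fin (n+1)) (i : Fin m) :
    ((θ i.castSucc : Fin (n+1)) : ℕ) = fApp θ (i : ℕ) :=
  fApp_mk θ _

theorem fApp_succ {m n : ℕ} (θ : Fin (m+1) →o Fin (n+1)) (i : Fin m) :
    ((θ i.succ : Fin (n+1)) : ℕ) = fApp θ ((i : ℕ) + 1) :=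
  fApp_mk θ _

theorem fApp_min {m n : ℕ} (θ : Fin (m+1) →o Fin (n+1)) (v : ℕ) :
    fApp θ (min v m) = fApp θ v := by
  simp only [fApp, min_le_right, min_eq_left]

theorem val_apply_ηOH {m n : ℕ} (θ : Fin (m+1) →o Fin (n+1)) (i P : ℕ) (q : Fin (m+1)) :
    ((θ (ηOH i P m q) : Fin (n+1)) : ℕ) =
    if (q:ℕ) ≤ i then fApp θ (q:ℕ) else if (q:ℕ) ≤ P then fApp θ i else fApp θ (q:ℕ) := by
  have hq := q.isLt
  rw [show ηOH i P m q = ⟨_, (ηOH i P m q).isLt⟩ from rfl, fApp_mk, ηOH_val]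
  split_ifs <;> rw [fApp_min]

theorem kOf_le {n : ℕ} (t : Fin (n+1) →o Fin 2) : kOf t ≤ n + 1 :=
  (Finset.card_filter_le _ _).trans (by simp)

theorem kOf_lt_iff {n : ℕ} (t : Fin (n+1) →o Fin 2) (q : Fin (n+1)) :
    (q : ℕ) < kOf t ↔ t q = 0 := by
  have zero_of_le : ∀ {a b : Fin (n+1)}, a ≤ b → t b = 0 → t a = 0 := fun hab hb =>
    Fin.le_zero_iff.mp (hb ▸ t.monotone hab)
  constructor
  · intro h
    by_contra hq
    have hsub : Finset.univ.filter (fun i => t i = 0) ⊆ Finset.Iio q := fun a ha => by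
      rw [Finset.mem_filter] at ha
      rw [Finset.mem_Iio]
      by_contra hle
      exact hq (zero_of_le (not_lt.mp hle) ha.2)
    have hc := Finset.card_le_card hsub
    rw [Fin.card_Iio] at hc
    exact absurd (lt_of_lt_of_le h hc) (lt_irrefl _)
  · intro h0
    have hsub : Finset.Iic q ⊆ Finset.univ.filter (fun i => t i = 0) := fun a ha =>
      Finset.mem_filter.mpr ⟨Finset.mem_univ a, zero_of_le (Finset.mem_Iic.mp ha) h0⟩
    have hc := Finset.card_le_card hsub
    rw [Fin.card_Iic] at hc
    rw [kOf]
    omega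

theorem kOf_comp_lt_iff {m n : ℕ} (θ : Fin (m+1) →o Fin (n+1)) (t : Fin (n+1) →o Fin 2)
    {q : ℕ} (hq : q ≤ m) : q < kOf (t.comp θ) ↔ fApp θ q < kOf t := by
  have hθq : θ ⟨q, by omega⟩ = ⟨fApp θ q, by have := fApp_le θ q; omega⟩ :=
    Fin.ext (fApp_mk θ _)
  rw [kOf_lt_iff (t.comp θ) ⟨q, by omega⟩, kOf_lt_iff t ⟨fApp θ q, by have := fApp_le θ q; omega⟩, ← hθq]
  rfl

theorem kOf_tau_zero (n : ℕ) : kOf (τOH n 0) = n + 1 := by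
  rw [kOf, Finset.filter_true_of_mem (fun i _ => by
    simp only [τOH, DFunLike.coe]
    rw [if_pos (by have := i.isLt; omega)]), Finset.card_univ, Fintype.card_fin]

theorem kOf_tau_top (n : ℕ) : kOf (τOH n (n+1)) = 0 := by
  rw [kOf, Finset.filter_false_of_mem (fun i _ => by
    simp only [τOH, DFunLike.coe]
    rw [if_neg (by omega)]
    exact one_ne_zero), Finset.card_empty]

section Blocks

variable {m n : ℕ} (θ : Fin (m+1) →o Fin (n+1))

theorem ηOH_comp_comp_ηOH_of_mem_block {i p j : ℕ} (hip : i ≤ p) (hpj : fApp θ p ≤ j)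
    (hjp : j < fApp θ (p+1)) :
    (ηOH (fApp θ i) j n).comp (θ.comp (ηOH i p m)) = θ.comp (ηOH i p m) :=
  orderHom_ext_val fun q => by
    simp only [OrderHom.comp_coe, Function.comp_apply]
    rw [ηOH_val, val_apply_ηOH]
    have l1 := fApp_le θ (q:ℕ)
    have l2 := fApp_le θ i
    have l3 : fApp θ i ≤ fApp θ p := fApp_mono θ hip
    by_cases h1 : (q:ℕ) ≤ i
    · have := fApp_mono θ h1
      split_ifs; omega
    · by_cases h2 : (q:ℕ) ≤ p
      · split_ifs <;> omega
      · have := fApp_mono θ (show p+1 ≤ (q:ℕ) by omega)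
        split_ifs <;> omega

theorem ηOH_comp_comp_ηOH_succ {i p j : ℕ} (hip : i ≤ p)
    (hj : fApp θ (p+1) ≤ j) :
    (ηOH (fApp θ i) j n).comp (θ.comp (ηOH i (p+1) m)) =
      (ηOH (fApp θ i) j n).comp (θ.comp (ηOH i p m)) :=
  orderHom_ext_val fun q => by
    simp only [OrderHom.comp_coe, Function.comp_apply]
    rw [ηOH_val, ηOH_val, val_apply_ηOH, val_apply_ηOH]
    have l1 := fApp_le θ (q:ℕ)
    have l2 := fApp_le θ i
    have l3 : fApp θ i ≤ fApp θ (p+1) := fApp_mono θ (by omega)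
    by_cases h1 : (q:ℕ) ≤ i
    · split_ifs <;> omega
    · by_cases h2 : (q:ℕ) ≤ p
      · split_ifs <;> omega
      · by_cases h3 : (q:ℕ) ≤ p+1
        · have l4 : fApp θ (q:ℕ) = fApp θ (p+1) := by rw [show (q:ℕ) = p+1 by omega]
          split_ifs <;> omega
        · split_ifs <;> omega

theorem ηOH_comp_eq_comp_ηOH {i K : ℕ} (hiK : i ≤ K)
    (hjump : ∀ v, K < v → v ≤ m → fApp θ K < fApp θ v) :
    (ηOH (fApp θ i) (fApp θ K) n).comp θ = θ.comp (ηOH i K m) :=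
  orderHom_ext_val fun q => by
    simp only [OrderHom.comp_coe, Function.comp_apply]
    rw [ηOH_val, val_apply_ηOH, ← fApp_coe θ q]
    have l1 := fApp_le θ (q:ℕ)
    have l2 := fApp_le θ i
    by_cases h1 : (q:ℕ) ≤ i
    · have := fApp_mono θ h1
      split_ifs; omega
    · by_cases h2 : (q:ℕ) ≤ K
      · have h3 := fApp_mono θ (show i ≤ (q:ℕ) by omega)
        have h4 := fApp_mono θ h2
        split_ifs <;> omega
      · have h3 := hjump (q:ℕ) (by omega) (by omega)
        have h4 := fApp_mono θ hiK
        split_ifs <;> omega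

end Blocks

namespace SGrp

variable (G : SGrp)

def mapHom {m n : ℕ} (θ : Fin (m+1) →o Fin (n+1)) : G.obj n →* G.obj m :=
  MonoidHom.mk' (G.map θ) (G.map_mul θ)

theorem map_one {m n : ℕ} (θ : Fin (m+1) →o Fin (n+1)) : G.map θ (1 : G.obj n) = 1 :=
  (G.mapHom θ).map_one

theorem map_inv {m n : ℕ} (θ : Fin (m+1) →o Fin (n+1)) (x : G.obj n) :
    G.map θ x⁻¹ = (G.map θ x)⁻¹ :=
  (G.mapHom θ).map_inv x

theorem map_aProd {m n : ℕ} (θ : Fin (m+1) →o Fin (n+1)) (f : ℕ → G.obj n) (a b : ℕ) :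
    G.map θ (aProd f a b) = aProd (fun j => G.map θ (f j)) a b :=
  Paper.map_aProd (G.mapHom θ) f a b

theorem map_dProd {m n : ℕ} (θ : Fin (m+1) →o Fin (n+1)) (f : ℕ → G.obj n) (a b : ℕ) :
    G.map θ (dProd f a b) = dProd (fun j => G.map θ (f j)) a b :=
  Paper.map_dProd (G.mapHom θ) f a b

theorem map_congr_val {m n : ℕ} {θ ψ : Fin (m+1) →o Fin (n+1)}
    (h : ∀ p : Fin (m+1), (θ p : ℕ) = (ψ p : ℕ)) (x : G.obj n) : G.map θ x = G.map ψ x := by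
  rw [orderHom_ext_val h]

theorem map_eq_self_of_val {n : ℕ} {θ : Fin (n+1) →o Fin (n+1)}
    (h : ∀ p : Fin (n+1), (θ p : ℕ) = (p : ℕ)) (x : G.obj n) : G.map θ x = x := by
  rw [show θ = OrderHom.id from orderHom_ext_val h, G.map_id]

theorem map_map_of_val {a b c : ℕ} (α : Fin (a+1) →o Fin (b+1)) (β : Fin (b+1) →o Fin (c+1))
    {γ : Fin (a+1) →o Fin (c+1)} (h : ∀ p : Fin (a+1), (β (α p) : ℕ) = (γ p : ℕ))
    (z : G.obj c) : G.map α (G.map β z) = G.map γ z := by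
  rw [G.map_comp α β z]
  exact G.map_congr_val h z

theorem gcast_eq_map {a b : ℕ} (h : a = b) (x : G.obj a) :
    G.gcast b x = G.map (ιOH b a) x := by
  subst h
  rw [gcast, dif_pos rfl]
  exact (G.map_eq_self_of_val (fun p => by simp [ιOH, DFunLike.coe, Nat.lt_succ_iff.mp p.isLt]) x).symm

theorem dcomp_eq_map {i c N : ℕ} (hc : c ≤ N) (x : G.obj N) :
    G.dcomp i c x = G.map (δchain i c N) x := by
  induction c generalizing i with
  | zero =>
    exact (G.map_eq_self_of_val (fun p => by
      simp only [δchain, DFunLike.coe]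
      have := p.isLt
      split_ifs <;> omega) x).symm
  | succ c ih =>
    show G.face (i+1) (G.dcomp (i+1) c x) = _
    rw [ih (by omega), face]
    exact G.map_map_of_val _ _ (fun p => by
      have hp := p.isLt
      simp only [δOH, δchain, DFunLike.coe]
      split_ifs <;> omega) x

theorem scomp_eq_map {i c M : ℕ} (x : G.obj M) :
    G.scomp i c x = G.map (σchain i c M) x := by
  induction c with
  | zero =>
    exact (G.map_eq_self_of_val (fun p => by
      simp only [σchain, DFunLike.coe]
      have := p.isLt
      split_ifs <;> omega) x).symm
  | succ c ih =>
    show G.deg (i+c) (G.scomp i c x) = _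
    rw [ih, deg]
    exact G.map_map_of_val _ _ (fun p => by
      have hp := p.isLt
      simp only [σOH, σchain, DFunLike.coe]
      split_ifs <;> omega) x

theorem ds_eq_map {i j N : ℕ} (hij : i ≤ j) (hj : j ≤ N) (x : G.obj N) :
    G.ds i j x = G.map (ηOH i j N) x := by
  rw [ds, G.dcomp_eq_map (by omega), G.scomp_eq_map, G.gcast_eq_map (by omega), G.map_comp,
    G.map_comp]
  refine G.map_congr_val (fun p => ?_) x
  have hp := p.isLt
  simp only [OrderHom.comp_coe, Function.comp_apply]
  simp only [ιOH, σchain, δchain, ηOH, DFunLike.coe]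
  split_ifs <;> omega

theorem dsTo_eq_map {i j n : ℕ} (hij : i ≤ j) (hin : i ≤ n) (x : G.obj j) :
    G.dsTo i n x = G.map (ζOH i n j) x := by
  rw [dsTo, G.dcomp_eq_map (by omega), G.gcast_eq_map (by omega), G.scomp_eq_map,
    G.gcast_eq_map (by omega), G.map_comp, G.map_comp, G.map_comp]
  refine G.map_congr_val (fun p => ?_) x
  have hp := p.isLt
  simp only [OrderHom.comp_coe, Function.comp_apply]
  simp only [ιOH, σchain, δchain, ζOH, DFunLike.coe]
  split_ifs <;> omega

theorem gcast_dcomp_eq_map {i n : ℕ} (hin : i ≤ n) (z : G.obj n) :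
    G.gcast i (G.dcomp i (n - i) z) = G.map (ιOH i n) z := by
  rw [G.dcomp_eq_map (by omega), G.gcast_eq_map (by omega), G.map_comp]
  refine G.map_congr_val (fun p => ?_) z
  have hp := p.isLt
  simp only [OrderHom.comp_coe, Function.comp_apply]
  simp only [ιOH, δchain, DFunLike.coe]
  split_ifs <;> omega

/-- The operator `d_j ⋯ d_{i+1} s_i ⋯ s_{j-1}` on `G_n`. -/
def collapse (n i j : ℕ) (z : G.obj n) : G.obj n := G.map (ηOH i j n) z

theorem collapse_of_le {n i j : ℕ} (hji : j ≤ i) (z : G.obj n) : G.collapse n i j z = z :=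
  G.map_eq_self_of_val (fun p => by
    have := p.isLt
    simp only [ηOH, DFunLike.coe]
    split_ifs <;> omega) z

theorem collapse_collapse {n i j m : ℕ} (hij : i ≤ j) (hjn : j ≤ n) (z : G.obj n) :
    G.collapse n i m (G.collapse n i j z) = G.collapse n i (max j m) z :=
  G.map_map_of_val _ _ (fun p => by
    have := p.isLt
    simp only [ηOH, DFunLike.coe]
    split_ifs <;> omega) z

theorem collapse_mul {n i j : ℕ} (z w : G.obj n) :
    G.collapse n i j (z * w) = G.collapse n i j z * G.collapse n i j w := G.map_mul _ z w

theorem collapse_inv {n i j : ℕ} (z : G.obj n) :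
    G.collapse n i j z⁻¹ = (G.collapse n i j z)⁻¹ := G.map_inv _ z

theorem collapse_aProd {n i j : ℕ} (f : ℕ → G.obj n) (a b : ℕ) :
    G.collapse n i j (aProd f a b) = aProd (fun l => G.collapse n i j (f l)) a b :=
  G.map_aProd _ f a b

theorem collapse_dProd {n i j : ℕ} (f : ℕ → G.obj n) (a b : ℕ) :
    G.collapse n i j (dProd f a b) = dProd (fun l => G.collapse n i j (f l)) a b :=
  G.map_dProd _ f a b

def hVal (n k : ℕ) (g : ℕ → G.obj n) (i : ℕ) : G.obj n := G.hAux n k g (n+1) i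

def yVal (n : ℕ) (g : ∀ j : ℕ, G.obj j) (i : ℕ) : G.obj n := G.yAux n g (n+1) i

theorem hAux_succ (n k : ℕ) (g : ℕ → G.obj n) (fuel i : ℕ) :
    G.hAux n k g (fuel+1) i = if k ≤ i + 1 then g i else
      aProd (fun j => G.ds i j (G.hAux n k g fuel j)⁻¹) (i+1) (k-1) *
      dProd (fun j => G.ds i (k-1) (g j)) i (k-1) := rfl

theorem yAux_succ (n : ℕ) (g : ∀ j : ℕ, G.obj j) (fuel i : ℕ) :
    G.yAux n g (fuel+1) i =
      aProd (fun j => G.ds i j (G.yAux n g fuel j)⁻¹) (i+1) n *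
      dProd (fun j => G.dsTo i n (g j)) i n := rfl

theorem hAux_fuel_stable {n k : ℕ} (hk : k ≤ n + 1) (g : ℕ → G.obj n) (fuel i : ℕ)
    (hi : n ≤ i + fuel + 1) : G.hAux n k g (fuel+2) i = G.hAux n k g (fuel+1) i := by
  induction fuel generalizing i with
  | zero =>
    rw [hAux_succ, hAux_succ, aProd_eq_one_of_le _ (by omega), aProd_eq_one_of_le _ (by omega)]
  | succ fuel ih =>
    rw [hAux_succ, hAux_succ (fuel := fuel + 1), aProd_congr (fun j _ _ => by rw [ih j (by omega)])]

theorem yAux_fuel_stable {n : ℕ} (g : ∀ j : ℕ, G.obj j) (fuel i : ℕ) (hi : n ≤ i + fuel + 1) :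
    G.yAux n g (fuel+2) i = G.yAux n g (fuel+1) i := by
  induction fuel generalizing i with
  | zero =>
    rw [yAux_succ, yAux_succ, aProd_eq_one_of_le _ (by omega), aProd_eq_one_of_le _ (by omega)]
  | succ fuel ih =>
    rw [yAux_succ, yAux_succ (fuel := fuel + 1),
      aProd_congr (fun j _ _ => by rw [ih j (by omega)])]

theorem SGn_eq_yVal {n : ℕ} (x : G.WbarN n) (i : Fin n) :
    G.SGn n x i = G.yVal n (G.gE x) (i : ℕ) := by
  obtain ⟨n, rfl⟩ : ∃ n', n = n' + 1 := ⟨n - 1, by have := i.pos; omega⟩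
  exact (G.yAux_fuel_stable (G.gE x) n (i:ℕ) (by omega)).symm

theorem hVal_of_le {n k : ℕ} (g : ℕ → G.obj n) {i : ℕ} (hki : k ≤ i + 1) :
    G.hVal n k g i = g i := by
  rw [hVal, hAux_succ, if_pos hki]

theorem hVal_of_lt {n k : ℕ} (hk : k ≤ n + 1) (g : ℕ → G.obj n) {i : ℕ} (hik : i + 1 < k) :
    G.hVal n k g i =
      aProd (fun j => (G.collapse n i j (G.hVal n k g j))⁻¹) (i+1) (k-1) *
      G.collapse n i (k-1) (dProd g i (k-1)) := by
  rw [hVal, ← G.hAux_fuel_stable hk g n i (by omega), hAux_succ, if_neg (by omega),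
    G.collapse_dProd]
  congr 1
  · refine aProd_congr (fun j hj hjk => ?_)
    rw [G.ds_eq_map (by omega) (by omega), G.map_inv]
    rfl
  · exact dProd_congr (fun j hj hjk => G.ds_eq_map (by omega) (by omega) _)

theorem yVal_eq {n : ℕ} (g : ∀ j : ℕ, G.obj j) {i : ℕ} (hi : i < n) :
    G.yVal n g i =
      aProd (fun j => (G.collapse n i j (G.yVal n g j))⁻¹) (i+1) n *
      dProd (fun j => G.map (ζOH i n j) (g j)) i n := by
  rw [yVal, ← G.yAux_fuel_stable g n i (by omega), yAux_succ]
  congr 1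
  · refine aProd_congr (fun j hj hjk => ?_)
    rw [G.ds_eq_map (by omega) (by omega), G.map_inv]
    rfl
  · exact dProd_congr (fun j hj hjk => G.dsTo_eq_map (by omega) (by omega) _)

/-- Telescoping for the recursion defining `S_G` and `H`: collapsing the recursion for `V i` by
`collapse i m` only collapses its factors `j < m` further, so `V i` and its collapse differ
exactly by the collapsed partial product. -/
theorem collapse_dProd_of_rec {n T : ℕ} (hT : T ≤ n) (V B : ℕ → G.obj n) {i m : ℕ}
    (hrec : V i = aProd (fun j => (G.collapse n i j (V j))⁻¹) (i+1) T * B i)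
    (hB : G.collapse n i m (B i) = B i) (him : i < m) (hmT : m ≤ T) :
    G.collapse n i m (dProd V i m) = dProd (fun j => G.collapse n i j (V j)) i m := by
  set R := aProd (fun j => (G.collapse n i j (V j))⁻¹) m T * B i
  have hV : V i = (dProd (fun j => G.collapse n i j (V j)) (i+1) m)⁻¹ * R := by
    rw [hrec, aProd_split _ (show i+1 ≤ m by omega) hmT, mul_assoc, ← aProd_inv]
  have hcV : G.collapse n i m (V i) = (dProd (fun j => G.collapse n i m (V j)) (i+1) m)⁻¹ * R := by
    rw [hrec, G.collapse_mul, hB, G.collapse_aProd,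
      aProd_congr (g := fun j => (G.collapse n i (max j m) (V j))⁻¹)
        (fun j hj hjT => by rw [G.collapse_inv, G.collapse_collapse (by omega) (by omega)]),
      aProd_split _ (show i+1 ≤ m by omega) hmT, mul_assoc, ← aProd_inv]
    congr 1
    · exact aProd_congr (fun j hj hjm => by rw [max_eq_right (by omega)])
    · exact congrArg (· * B i) (aProd_congr (fun j hj hjT => by rw [max_eq_left (by omega)]))
  calc G.collapse n i m (dProd V i m)
      = dProd (fun j => G.collapse n i m (V j)) (i+1) m * G.collapse n i m (V i) := by
        rw [dProd_succ_bot V him, G.collapse_mul, G.collapse_dProd]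
    _ = dProd (fun j => G.collapse n i j (V j)) (i+1) m * V i := by
        rw [hcV, hV, mul_inv_cancel_left, mul_inv_cancel_left]
    _ = dProd (fun j => G.collapse n i j (V j)) i m := by
        rw [dProd_succ_bot _ him, G.collapse_of_le le_rfl]

theorem map_collapse_of_avoid {m' n k c : ℕ} (ψ : Fin (m'+1) →o Fin (n+1))
    (hav : ∀ q : Fin (m'+1), (ψ q : ℕ) ≤ c ∨ k ≤ (ψ q : ℕ)) {j l : ℕ}
    (hcj : c ≤ j) (hlk : l < k) (z : G.obj n) :
    G.map ψ (G.collapse n j l z) = G.map ψ z := by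
  rw [collapse, G.map_comp]
  refine G.map_congr_val (fun p => ?_) z
  have hp := (ψ p).isLt
  rcases hav p with h | h <;>
  · simp only [OrderHom.comp_coe, Function.comp_apply]
    simp only [ηOH, DFunLike.coe] at hp h ⊢
    split_ifs <;> omega

/-- Below the cut `k` the collapses in the recursion for `H` only move points of `(c, k)`, which
`ψ` misses, so through `ψ` that recursion telescopes to the input. -/
theorem dProd_map_hVal_of_avoid {n k : ℕ} (hk : k ≤ n + 1) (g : ℕ → G.obj n) {m' c : ℕ}
    (ψ : Fin (m'+1) →o Fin (n+1))
    (hav : ∀ q : Fin (m'+1), (ψ q : ℕ) ≤ c ∨ k ≤ (ψ q : ℕ)) {j : ℕ}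
    (hcj : c ≤ j) (hjk : j ≤ k - 1) :
    dProd (fun l => G.map ψ (G.hVal n k g l)) j (k-1) = G.map ψ (dProd g j (k-1)) := by
  rcases Nat.eq_or_lt_of_le hjk with rfl | hjk
  · rw [dProd_eq_one_of_le _ le_rfl, dProd_eq_one_of_le _ le_rfl, G.map_one]
  · have hj : G.map ψ (G.hVal n k g j) =
        (dProd (fun l => G.map ψ (G.hVal n k g l)) (j+1) (k-1))⁻¹ *
        G.map ψ (dProd g j (k-1)) := by
      rw [G.hVal_of_lt hk g (by omega), G.map_mul, G.map_collapse_of_avoid ψ hav hcj (by omega),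
        G.map_aProd, ← aProd_inv]
      congr 1
      refine aProd_congr (fun l hl hlk => ?_)
      rw [G.map_inv, G.map_collapse_of_avoid ψ hav hcj (by omega)]
    rw [dProd_succ_bot _ hjk, hj, mul_inv_cancel_left]

theorem Hn_tau_top {n : ℕ} (x : Fin n → G.obj n) : G.Hn n x (τOH n (n+1)) = x := by
  funext i
  show G.hAux n (kOf (τOH n (n+1))) (G.xE x) (n+1) (i : ℕ) = x i
  rw [kOf_tau_top, hAux_succ, if_pos (by omega), xE, dif_pos i.isLt]

theorem map_ιOH_yVal {n : ℕ} (x : G.WbarN n) (i : ℕ) (hi : i < n) :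
    G.map (ιOH i n) (G.yVal n (G.gE x) i) = G.gE x i := by
  have hA : ∀ j, i + 1 ≤ j → j < n →
      G.map (ιOH i n) (G.collapse n i j (G.yVal n (G.gE x) j))⁻¹ =
      (G.map (ιOH i j) (G.gE x j))⁻¹ := by
    intro j hj hjn
    rw [G.map_inv, collapse, G.map_map_of_val (ιOH i n) (ηOH i j n) (γ := ιOH i n) (fun p => by
        have := p.isLt
        simp only [ιOH, ηOH, DFunLike.coe]
        split_ifs <;> omega),
      ← map_ιOH_yVal x j hjn,
      G.map_map_of_val (ιOH i j) (ιOH j n) (γ := ιOH i n) (fun p => by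
        have := p.isLt
        simp only [ιOH, DFunLike.coe]
        omega)]
  have hD : ∀ j, i ≤ j → j < n →
      G.map (ιOH i n) (G.map (ζOH i n j) (G.gE x j)) = G.map (ιOH i j) (G.gE x j) :=
    fun j _ _ => G.map_map_of_val (ιOH i n) (ζOH i n j) (fun p => by
      have := p.isLt
      simp only [ιOH, ζOH, DFunLike.coe]
      omega) _
  rw [G.yVal_eq _ hi, G.map_mul, G.map_aProd, G.map_dProd, aProd_congr hA, dProd_congr hD,
    aProd_inv, dProd_succ_bot _ hi, inv_mul_cancel_left,
    G.map_eq_self_of_val (fun p => by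
      have := p.isLt
      simp only [ιOH, DFunLike.coe]
      omega)]
termination_by n - i

theorem DGn_SGn {n : ℕ} (x : G.WbarN n) : G.DGn n (G.SGn n x) = x := by
  funext i
  show G.gcast (i:ℕ) (G.dcomp (i:ℕ) (n - (i:ℕ)) (G.SGn n x i)) = x i
  rw [G.SGn_eq_yVal, G.gcast_dcomp_eq_map i.isLt.le, G.map_ιOH_yVal x i i.isLt, gE,
    dif_pos i.isLt]

theorem hVal_xE_eq_yVal_DGn {n : ℕ} (x : Fin n → G.obj n) (i : ℕ) (hi : i < n) :
    G.hVal n (n+1) (G.xE x) i = G.yVal n (G.gE (G.DGn n x)) i := by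
  rw [G.hVal_of_lt le_rfl _ (by omega), G.yVal_eq _ hi, Nat.add_sub_cancel, G.collapse_dProd]
  congr 1
  · exact aProd_congr (fun j _ hjn => by rw [hVal_xE_eq_yVal_DGn x j hjn])
  · refine dProd_congr (fun j hj hjn => ?_)
    rw [gE, dif_pos hjn]
    show G.collapse n i n (G.xE x j) =
      G.map (ζOH i n j) (G.gcast j (G.dcomp j (n - j) (x ⟨j, hjn⟩)))
    rw [G.gcast_dcomp_eq_map hjn.le, xE, dif_pos hjn, collapse,
      G.map_map_of_val (ζOH i n j) (ιOH j n) (γ := ηOH i n n) (fun p => by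
        have := p.isLt
        simp only [ζOH, ιOH, ηOH, DFunLike.coe]
        split_ifs <;> omega)]
termination_by n - i

theorem Hn_tau_zero {n : ℕ} (x : Fin n → G.obj n) :
    G.Hn n x (τOH n 0) = G.SGn n (G.DGn n x) := by
  funext i
  show G.hAux n (kOf (τOH n 0)) (G.xE x) (n+1) (i:ℕ) = G.SGn n (G.DGn n x) i
  rw [kOf_tau_zero, G.SGn_eq_yVal]
  exact G.hVal_xE_eq_yVal_DGn x i i.isLt

theorem collapse_map_ζOH {n i l j : ℕ} (z : G.obj j) :
    G.collapse n i l (G.map (ζOH i n j) z) = G.map (ζOH i n j) z :=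
  G.map_map_of_val _ _ (fun p => by
    have := p.isLt
    simp only [ζOH, ηOH, DFunLike.coe]
    split_ifs <;> omega) z

theorem hVal_xE_SGn {n k : ℕ} (hk : k ≤ n + 1) (x : G.WbarN n) (i : ℕ) :
    G.hVal n k (G.xE (G.SGn n x)) i = G.xE (G.SGn n x) i := by
  by_cases hki : k ≤ i + 1
  · exact G.hVal_of_le _ hki
  have hy : ∀ j, j < n → G.xE (G.SGn n x) j = G.yVal n (G.gE x) j := fun j hj => by
    rw [xE, dif_pos hj, SGn_eq_yVal]
  rw [G.hVal_of_lt hk _ (by omega),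
    aProd_congr (g := fun j => (G.collapse n i j (G.yVal n (G.gE x) j))⁻¹)
      (fun j hj hjk => by rw [hVal_xE_SGn hk x j, hy j (by omega)]),
    dProd_congr (g := G.yVal n (G.gE x)) (fun j _ hjk => hy j (by omega)),
    G.collapse_dProd_of_rec le_rfl (G.yVal n (G.gE x))
      (fun i => dProd (fun j => G.map (ζOH i n j) (G.gE x j)) i n) (G.yVal_eq _ (by omega))
      (by rw [G.collapse_dProd]; exact dProd_congr (fun j _ _ => G.collapse_map_ζOH _))
      (by omega) (by omega),
    aProd_inv, dProd_succ_bot _ (show i < k - 1 by omega), inv_mul_cancel_left, G.collapse_of_le le_rfl,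
    hy i (by omega)]
termination_by k - i

theorem Hn_SGn {n : ℕ} (x : G.WbarN n) (t : Fin (n+1) →o Fin 2) :
    G.Hn n (G.SGn n x) t = G.SGn n x := by
  funext i
  have h := G.hVal_xE_SGn (kOf_le t) x i
  rwa [xE, dif_pos i.isLt] at h

theorem dProd_xE_diagMap {m n : ℕ} (θ : Fin (m+1) →o Fin (n+1)) (x : Fin n → G.obj n)
    {u v : ℕ} (huv : u ≤ v) (hv : v ≤ m) :
    dProd (G.xE (G.diagMap θ x)) u v =
      dProd (fun j => G.map θ (G.xE x j)) (fApp θ u) (fApp θ v) := by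
  induction v with
  | zero =>
    obtain rfl : u = 0 := by omega
    rw [dProd_eq_one_of_le _ le_rfl, dProd_eq_one_of_le _ le_rfl]
  | succ v ih =>
    rcases Nat.lt_or_eq_of_le huv with huv | rfl
    · rw [dProd_succ _ (by omega), ih (by omega) (by omega),
        dProd_split (fun j => G.map θ (G.xE x j)) (fApp_mono θ (show u ≤ v by omega))
          (fApp_mono θ (Nat.le_succ v)), xE, dif_pos (show v < m by omega)]
      show dProd _ (θ (Fin.castSucc ⟨v, _⟩) : ℕ) (θ (Fin.succ ⟨v, _⟩) : ℕ) * _ = _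
      rw [fApp_castSucc, fApp_succ]
    · rw [dProd_eq_one_of_le _ le_rfl, dProd_eq_one_of_le _ le_rfl]

theorem dProd_collapse_map_blocks {m n : ℕ} (θ : Fin (m+1) →o Fin (n+1)) (h : ℕ → G.obj n)
    {i K : ℕ} (p : ℕ) (hip : i ≤ p) (hpK : p ≤ K) :
    dProd (fun q => G.collapse m i q
        (dProd (fun j => G.map θ (h j)) (fApp θ q) (fApp θ (q+1)))) p K =
      G.collapse m i p
        (G.map θ (dProd (fun j => G.collapse n (fApp θ i) j (h j)) (fApp θ p) (fApp θ K))) := by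
  rcases Nat.lt_or_eq_of_le hpK with hpK | rfl
  · have hnext : G.collapse m i (p+1) (G.map θ (dProd
          (fun j => G.collapse n (fApp θ i) j (h j)) (fApp θ (p+1)) (fApp θ K))) =
        G.collapse m i p (G.map θ (dProd
          (fun j => G.collapse n (fApp θ i) j (h j)) (fApp θ (p+1)) (fApp θ K))) := by
      simp only [collapse, G.map_dProd]
      refine dProd_congr (fun j hj _ => ?_)
      rw [G.map_comp, G.map_comp, G.map_comp, G.map_comp, ηOH_comp_comp_ηOH_succ θ hip hj]
    have hblock : G.collapse m i p (dProd (fun j => G.map θ (h j)) (fApp θ p) (fApp θ (p+1))) =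
        G.collapse m i p (G.map θ (dProd
          (fun j => G.collapse n (fApp θ i) j (h j)) (fApp θ p) (fApp θ (p+1)))) := by
      simp only [collapse, G.map_dProd]
      refine dProd_congr (fun j hj hjp => ?_)
      rw [G.map_comp, G.map_comp, G.map_comp, ηOH_comp_comp_ηOH_of_mem_block θ hip hj hjp]
    rw [dProd_succ_bot _ hpK, dProd_collapse_map_blocks θ h (p+1) (by omega) hpK, hnext,
      hblock, ← G.collapse_mul, ← G.map_mul,
      ← dProd_split _ (fApp_mono θ (Nat.le_succ p)) (fApp_mono θ hpK)]
  · rw [dProd_eq_one_of_le _ le_rfl, dProd_eq_one_of_le _ le_rfl, G.map_one, collapse, G.map_one]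
termination_by K - p

theorem map_dProd_collapse_hVal {m n k : ℕ} (hk : k ≤ n + 1) (θ : Fin (m+1) →o Fin (n+1))
    (g : ℕ → G.obj n) {i K : ℕ} (hiK : i ≤ K) (hKk : fApp θ K < k)
    (hjump : ∀ v, K < v → v ≤ m → k ≤ fApp θ v) :
    G.map θ (dProd (fun j => G.collapse n (fApp θ i) j (G.hVal n k g j)) (fApp θ i) (fApp θ K)) =
      G.collapse m i K (G.map θ (dProd g (fApp θ i) (fApp θ K))) := by
  set a := fApp θ i
  set c := fApp θ K
  have hac : a ≤ c := fApp_mono θ hiK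
  rcases Nat.lt_or_eq_of_le hac with hac | hac
  swap
  · rw [hac, dProd_eq_one_of_le _ le_rfl, dProd_eq_one_of_le _ le_rfl, G.map_one, collapse,
      G.map_one]
  set ψ := θ.comp (ηOH i K m)
  have hav : ∀ q : Fin (m+1), (ψ q : ℕ) ≤ a ∨ k ≤ (ψ q : ℕ) := by
    intro q
    show ((θ (ηOH i K m q)) : ℕ) ≤ _ ∨ _ ≤ ((θ (ηOH i K m q)) : ℕ)
    rw [val_apply_ηOH]
    by_cases h1 : (q:ℕ) ≤ i
    · exact Or.inl (by rw [if_pos h1]; exact fApp_mono θ h1)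
    · by_cases h2 : (q:ℕ) ≤ K
      · exact Or.inl (by rw [if_neg h1, if_pos h2])
      · exact Or.inr (by rw [if_neg h1, if_neg h2]; exact hjump q (by omega) (by omega))
  have hψ : ∀ b, a ≤ b → b ≤ k - 1 →
      G.map ψ (dProd (G.hVal n k g) b (k-1)) = G.map ψ (dProd g b (k-1)) := fun b hb hbk => by
    rw [G.map_dProd, G.dProd_map_hVal_of_avoid hk g ψ hav hb hbk]
  have htel := G.collapse_dProd_of_rec (show k-1 ≤ n by omega) (G.hVal n k g)
    (fun i' => G.collapse n i' (k-1) (dProd g i' (k-1)))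
    (G.hVal_of_lt hk g (show a + 1 < k by omega))
    (by rw [G.collapse_collapse (by omega) (by omega), max_eq_left (by omega)]) hac (by omega)
  rw [← htel, collapse, collapse, G.map_comp, G.map_comp,
    ηOH_comp_eq_comp_ηOH θ hiK (fun v hv hvm => by have := hjump v hv hvm; omega)]
  refine mul_left_cancel (a := G.map ψ (dProd (G.hVal n k g) c (k-1))) ?_
  rw [← G.map_mul, ← dProd_split _ hac.le (by omega), hψ a le_rfl (by omega),
    hψ c hac.le (by omega), ← G.map_mul, ← dProd_split _ hac.le (by omega)]

theorem map_dProd_hVal_block_of_le {m n : ℕ} (θ : Fin (m+1) →o Fin (n+1)) (x : Fin n → G.obj n)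
    (t : Fin (n+1) →o Fin 2) {i : ℕ} (him : i < m) (hik : kOf (t.comp θ) ≤ i + 1) :
    dProd (fun j => G.map θ (G.hVal n (kOf t) (G.xE x) j)) (fApp θ i) (fApp θ (i+1)) =
      G.hVal m (kOf (t.comp θ)) (G.xE (G.diagMap θ x)) i := by
  have hk : kOf t ≤ fApp θ (i+1) := by
    have := kOf_comp_lt_iff θ t (q := i+1) (by omega)
    omega
  rw [G.hVal_of_le _ hik, xE, dif_pos him]
  show _ = dProd _ (θ (Fin.castSucc ⟨i, him⟩) : ℕ) (θ (Fin.succ ⟨i, him⟩) : ℕ)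
  rw [fApp_castSucc, fApp_succ]
  by_cases hak : kOf t ≤ fApp θ i + 1
  · exact dProd_congr (fun j hj _ => by rw [G.hVal_of_le _ (by omega)])
  have hav : ∀ q : Fin (m+1), (θ q : ℕ) ≤ fApp θ i ∨ kOf t ≤ (θ q : ℕ) := by
    intro q
    rw [← fApp_coe]
    by_cases hqi : (q : ℕ) ≤ i
    · exact Or.inl (fApp_mono θ hqi)
    · exact Or.inr (hk.trans (fApp_mono θ (by omega)))
  have h1 : fApp θ i ≤ kOf t - 1 := by omega
  have h2 : kOf t - 1 ≤ fApp θ (i+1) := by omega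
  rw [dProd_split (fun j => G.map θ (G.hVal n (kOf t) (G.xE x) j)) h1 h2,
    dProd_split (fun j => G.map θ (G.xE x j)) h1 h2,
    G.dProd_map_hVal_of_avoid (kOf_le t) (G.xE x) θ hav le_rfl h1, G.map_dProd,
    dProd_congr (fun j hj _ => by rw [G.hVal_of_le _ (by omega)])]

theorem map_dProd_hVal_block {m n : ℕ} (θ : Fin (m+1) →o Fin (n+1)) (x : Fin n → G.obj n)
    (t : Fin (n+1) →o Fin 2) (i : ℕ) (him : i < m) :
    dProd (fun j => G.map θ (G.hVal n (kOf t) (G.xE x) j)) (fApp θ i) (fApp θ (i+1)) =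
      G.hVal m (kOf (t.comp θ)) (G.xE (G.diagMap θ x)) i := by
  set k := kOf t
  set k' := kOf (t.comp θ)
  by_cases hik : k' ≤ i + 1
  · exact G.map_dProd_hVal_block_of_le θ x t him hik
  have hk'm : k' ≤ m + 1 := kOf_le (t.comp θ)
  have hiff : ∀ q, q ≤ m → (q < k' ↔ fApp θ q < k) := fun q hq => kOf_comp_lt_iff θ t hq
  have hKk : fApp θ (k'-1) < k := (hiff (k'-1) (by omega)).mp (by omega)
  have hjump : ∀ v, k' - 1 < v → v ≤ m → k ≤ fApp θ v := fun v h1 h2 => by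
    have := hiff v h2
    omega
  have hblocks := G.dProd_collapse_map_blocks θ (G.hVal n k (G.xE x)) (K := k'-1) i le_rfl
    (by omega)
  rw [dProd_succ_bot _ (show i < k'-1 by omega), G.collapse_of_le le_rfl, G.collapse_of_le le_rfl,
    G.map_dProd_collapse_hVal (kOf_le t) θ (G.xE x) (by omega) hKk hjump] at hblocks
  rw [G.hVal_of_lt hk'm _ (by omega),
    aProd_congr (g := fun p => (G.collapse m i p (dProd
      (fun j => G.map θ (G.hVal n k (G.xE x) j)) (fApp θ p) (fApp θ (p+1))))⁻¹)
      (fun p hp hpk => by rw [map_dProd_hVal_block θ x t p (by omega)]),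
    G.dProd_xE_diagMap θ x (by omega) (by omega), ← G.map_dProd θ (G.xE x), aProd_inv,
    ← hblocks, inv_mul_cancel_left]
termination_by m - i

theorem diagMap_Hn {m n : ℕ} (θ : Fin (m+1) →o Fin (n+1)) (x : Fin n → G.obj n)
    (t : Fin (n+1) →o Fin 2) : G.diagMap θ (G.Hn n x t) = G.Hn m (G.diagMap θ x) (t.comp θ) := by
  funext i
  show dProd (fun j => G.map θ (G.xE (G.Hn n x t) j)) (θ i.castSucc : ℕ) (θ i.succ : ℕ) =
    G.hVal m (kOf (t.comp θ)) (G.xE (G.diagMap θ x)) i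
  rw [fApp_castSucc, fApp_succ, ← G.map_dProd_hVal_block θ x t i i.isLt]
  refine dProd_congr (fun j _ hj => ?_)
  rw [xE, dif_pos (show j < n by have := fApp_le θ ((i:ℕ)+1); omega)]
  rfl

end SGrp

end Paper

open Paper Paper.SGrp in
/-- the homotopy `H` is constant along `S_G`; consequently `W̄G` is a strong
simplicial deformation retract of `Diag NG`, with strong deformation retraction `D_G`
(the coretraction `S_G` is dimensionwise injective, `S_G D_G = id`, and `H` is a simplicial
homotopy from `D_G S_G` to the identity which is constant along `S_G`). -/
theorem stmt_17 (G : SGrp) :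
    (∀ (n : ℕ) (x : G.WbarN n) (t : Fin (n+1) →o Fin 2), G.Hn n (G.SGn n x) t = G.SGn n x) ∧
    (∀ (n : ℕ) (x : G.WbarN n), G.DGn n (G.SGn n x) = x) ∧
    (∀ (n : ℕ) (x y : G.WbarN n), G.SGn n x = G.SGn n y → x = y) ∧
    (∀ {m n : ℕ} (θ : Fin (m+1) →o Fin (n+1)) (x : Fin n → G.obj n) (t : Fin (n+1) →o Fin 2),
      G.diagMap θ (G.Hn n x t) = G.Hn m (G.diagMap θ x) (t.comp θ)) ∧
    (∀ (n : ℕ) (x : Fin n → G.obj n), G.Hn n x (τOH n 0) = G.SGn n (G.DGn n x)) ∧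
    (∀ (n : ℕ) (x : Fin n → G.obj n), G.Hn n x (τOH n (n+1)) = x) :=
  ⟨fun _ => G.Hn_SGn, fun _ => G.DGn_SGn,
    fun _ x y h => by rw [← G.DGn_SGn x, h, G.DGn_SGn y],
    G.diagMap_Hn, fun _ => G.Hn_tau_zero, fun _ => G.Hn_tau_top⟩
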